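/- arXiv:1810.08181 — 3 statements merged into one kernel-verified Lean document; each statement's English description precedes it below -/
import Mathlib

section
/- Let c1, c2 > 0, 0 < α < 2, and m ≥ 1. Define ρ(r) = c1 · r^(α−2) · e^(−c2·r/m) for r ≥ 1. Then there exists a constant C depending only on c1, c2, α (not on m or n1) such that for all integers n1 with 1 ≤ n1 ≤ m, one has Σ_{i≥0} (2^(i+1)·n1)^2 · ρ(2^(i−1)·n1) ≤ C · m^α. -/
open Real Finset

/-- Geometric sum over any finset, centered at `j0`, is at most `2/(1-q)`. -/
lemma geom_dist_sum (q : ℝ) (h0 : 0 ≤ q) (h1 : q < 1) (j0 : ℕ) (s : Finset ℕ) :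
    ∑ i ∈ s, q ^ Nat.dist i j0 ≤ 2 / (1 - q) := by
  have hsum : Summable (fun k : ℕ => q ^ k) := summable_geometric_of_lt_one h0 h1
  have htsum : ∑' k : ℕ, q ^ k = (1 - q)⁻¹ := tsum_geometric_of_lt_one h0 h1
  have h1q : 0 < 1 - q := by linarith
  have hA : ∑ i ∈ s.filter (· ≤ j0), q ^ Nat.dist i j0 ≤ (1 - q)⁻¹ := by
    have h1' : ∑ i ∈ s.filter (· ≤ j0), q ^ Nat.dist i j0
        ≤ ∑ i ∈ Finset.range (j0 + 1), q ^ Nat.dist i j0 := by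
      apply Finset.sum_le_sum_of_subset_of_nonneg
      · intro i hi
        simp only [Finset.mem_filter] at hi
        exact Finset.mem_range.mpr (Nat.lt_succ_of_le hi.2)
      · intro i _ _; positivity
    have h2' : ∑ i ∈ Finset.range (j0 + 1), q ^ Nat.dist i j0
        = ∑ k ∈ Finset.range (j0 + 1), q ^ k := by
      rw [← Finset.sum_range_reflect (fun k => q ^ k) (j0 + 1)]
      apply Finset.sum_congr rfl
      intro i hi
      rw [Finset.mem_range] at hi
      have hij : i ≤ j0 := Nat.lt_succ_iff.mp hi
      rw [Nat.dist_eq_sub_of_le hij]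
      congr 1
    calc ∑ i ∈ s.filter (· ≤ j0), q ^ Nat.dist i j0
        ≤ ∑ k ∈ Finset.range (j0 + 1), q ^ k := by rw [← h2']; exact h1'
      _ ≤ ∑' k : ℕ, q ^ k := Summable.sum_le_tsum _ (fun i _ => by positivity) hsum
      _ = (1 - q)⁻¹ := htsum
  have hB : ∑ i ∈ s.filter (fun i => ¬ i ≤ j0), q ^ Nat.dist i j0 ≤ (1 - q)⁻¹ := by
    have himg : ∑ i ∈ s.filter (fun i => ¬ i ≤ j0), q ^ Nat.dist i j0
        = ∑ k ∈ (s.filter (fun i => ¬ i ≤ j0)).image (fun i => i - j0), q ^ k := by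
      rw [Finset.sum_image]
      · apply Finset.sum_congr rfl
        intro i hi
        simp only [Finset.mem_filter, not_le] at hi
        rw [Nat.dist_eq_sub_of_le_right (le_of_lt hi.2)]
      · intro a ha b hb hab
        simp only [Finset.mem_coe, Finset.mem_filter, not_le] at ha hb
        beta_reduce at hab
        omega
    rw [himg]
    calc ∑ k ∈ (s.filter (fun i => ¬ i ≤ j0)).image (fun i => i - j0), q ^ k
        ≤ ∑' k : ℕ, q ^ k := Summable.sum_le_tsum _ (fun i _ => by positivity) hsum
      _ = (1 - q)⁻¹ := htsum
  calc ∑ i ∈ s, q ^ Nat.dist i j0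
      = ∑ i ∈ s.filter (· ≤ j0), q ^ Nat.dist i j0
        + ∑ i ∈ s.filter (fun i => ¬ i ≤ j0), q ^ Nat.dist i j0 :=
        (Finset.sum_filter_add_sum_filter_not s _ _).symm
    _ ≤ (1 - q)⁻¹ + (1 - q)⁻¹ := add_le_add hA hB
    _ = 2 / (1 - q) := by rw [div_eq_mul_inv]; ring

lemma cube_le_exp (y : ℝ) (hy : 0 ≤ y) : y ^ 3 ≤ 27 * Real.exp y := by
  have h1 : y / 3 ≤ Real.exp (y / 3) := by
    have := Real.add_one_le_exp (y / 3)
    linarith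
  have h2 : (y / 3) ^ 3 ≤ (Real.exp (y / 3)) ^ 3 := by
    apply pow_le_pow_left₀ (by positivity) h1
  have h3 : (Real.exp (y / 3)) ^ 3 = Real.exp y := by
    rw [← Real.exp_nat_mul]
    congr 1
    push_cast
    ring
  nlinarith [h2, h3]

/-- `t^(α+1) e^{-c2 t} ≤ 1 + 27/c2^3` for `t > 0`. -/
lemma g_le_K2 (c2 α : ℝ) (hc2 : 0 < c2) (hα0 : 0 < α) (hα2 : α < 2) (t : ℝ) (ht : 0 < t) :
    t ^ (α + 1) * Real.exp (-c2 * t) ≤ 1 + 27 / c2 ^ 3 := by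
  have hK : (0:ℝ) < 27 / c2 ^ 3 := by positivity
  rcases le_total t 1 with h | h
  · have h1 : t ^ (α + 1) ≤ 1 := Real.rpow_le_one (le_of_lt ht) h (by linarith)
    have h2 : Real.exp (-c2 * t) ≤ 1 := Real.exp_le_one_iff.mpr (by nlinarith)
    nlinarith [Real.exp_pos (-c2 * t), Real.rpow_pos_of_pos ht (α + 1)]
  · have h1 : t ^ (α + 1) ≤ t ^ (3:ℝ) :=
      Real.rpow_le_rpow_of_exponent_le h (by linarith)
    have h3 : t ^ (3:ℝ) = t ^ (3:ℕ) := by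
      rw [← Real.rpow_natCast t 3]; norm_num
    have hcube : (c2 * t) ^ 3 ≤ 27 * Real.exp (c2 * t) := cube_le_exp _ (by positivity)
    have h4 : t ^ (3:ℕ) * Real.exp (-c2 * t) ≤ 27 / c2 ^ 3 := by
      rw [le_div_iff₀ (by positivity : (0:ℝ) < c2 ^ 3)]
      have hid : Real.exp (-c2 * t) * Real.exp (c2 * t) = 1 := by
        rw [← Real.exp_add]
        ring_nf
        exact Real.exp_zero
      nlinarith [mul_nonneg (sub_nonneg.mpr hcube) (le_of_lt (Real.exp_pos (-c2 * t))), hid,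
        Real.exp_pos (-c2 * t), Real.exp_pos (c2 * t)]
    calc t ^ (α + 1) * Real.exp (-c2 * t)
        ≤ t ^ (3:ℝ) * Real.exp (-c2 * t) := by
          apply mul_le_mul_of_nonneg_right h1 (le_of_lt (Real.exp_pos _))
      _ = t ^ (3:ℕ) * Real.exp (-c2 * t) := by rw [h3]
      _ ≤ 27 / c2 ^ 3 := h4
      _ ≤ 1 + 27 / c2 ^ 3 := by linarith

/-- The central pointwise bound: `(2^s)^α e^{-c2 2^s} ≤ (2 + 27/c2^3) · 2^{-min α 1 · |s|}`. -/
lemma g_bound (c2 α : ℝ) (hc2 : 0 < c2) (hα0 : 0 < α) (hα2 : α < 2) (s : ℝ) :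
    ((2:ℝ) ^ s) ^ α * Real.exp (-c2 * (2:ℝ) ^ s)
      ≤ (2 + 27 / c2 ^ 3) * (2:ℝ) ^ (-(min α 1) * |s|) := by
  set b := min α 1 with hb
  have hb0 : 0 < b := lt_min hα0 one_pos
  have hb1 : b ≤ 1 := min_le_right _ _
  have hbα : b ≤ α := min_le_left _ _
  have ht : (0:ℝ) < (2:ℝ) ^ s := Real.rpow_pos_of_pos two_pos s
  have hK : (0:ℝ) < 27 / c2 ^ 3 := by positivity
  have hpow : (0:ℝ) < (2:ℝ) ^ (-b * |s|) := Real.rpow_pos_of_pos two_pos _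
  rcases le_total s 0 with h | h
  · have habs : |s| = -s := abs_of_nonpos h
    have h1 : Real.exp (-c2 * (2:ℝ) ^ s) ≤ 1 :=
      Real.exp_le_one_iff.mpr (by nlinarith)
    have h2 : ((2:ℝ) ^ s) ^ α = (2:ℝ) ^ (s * α) := by
      rw [← Real.rpow_mul (by norm_num : (0:ℝ) ≤ 2)]
    have h3 : (2:ℝ) ^ (s * α) ≤ (2:ℝ) ^ (-b * |s|) := by
      apply Real.rpow_le_rpow_of_exponent_le one_le_two
      rw [habs]
      nlinarith
    calc ((2:ℝ) ^ s) ^ α * Real.exp (-c2 * (2:ℝ) ^ s)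
        ≤ ((2:ℝ) ^ s) ^ α * 1 := by
          apply mul_le_mul_of_nonneg_left h1 (le_of_lt (Real.rpow_pos_of_pos ht α))
      _ = (2:ℝ) ^ (s * α) := by rw [mul_one, h2]
      _ ≤ (2:ℝ) ^ (-b * |s|) := h3
      _ ≤ (2 + 27 / c2 ^ 3) * (2:ℝ) ^ (-b * |s|) := by nlinarith
  · have habs : |s| = s := abs_of_nonneg h
    set t := (2:ℝ) ^ s with htdef
    have hsplit : t ^ α * Real.exp (-c2 * t) = (t ^ (α + 1) * Real.exp (-c2 * t)) * t⁻¹ := by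
      rw [Real.rpow_add ht, Real.rpow_one]
      field_simp
    have hK2 := g_le_K2 c2 α hc2 hα0 hα2 t ht
    have hinv : t⁻¹ = (2:ℝ) ^ (-s) := by
      rw [htdef, ← Real.rpow_neg (by norm_num : (0:ℝ) ≤ 2)]
    have h5 : (2:ℝ) ^ (-s) ≤ (2:ℝ) ^ (-b * |s|) := by
      apply Real.rpow_le_rpow_of_exponent_le one_le_two
      rw [habs]
      nlinarith
    calc t ^ α * Real.exp (-c2 * t)
        = (t ^ (α + 1) * Real.exp (-c2 * t)) * t⁻¹ := hsplit
      _ ≤ (1 + 27 / c2 ^ 3) * t⁻¹ := by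
          apply mul_le_mul_of_nonneg_right hK2 (by positivity)
      _ = (1 + 27 / c2 ^ 3) * (2:ℝ) ^ (-s) := by rw [hinv]
      _ ≤ (1 + 27 / c2 ^ 3) * (2:ℝ) ^ (-b * |s|) := by
          apply mul_le_mul_of_nonneg_left h5 (by positivity)
      _ ≤ (2 + 27 / c2 ^ 3) * (2:ℝ) ^ (-b * |s|) := by nlinarith

set_option maxHeartbeats 1000000 in
theorem stmt_0 (c1 c2 α : ℝ) (hc1 : 0 < c1) (hc2 : 0 < c2) (hα0 : 0 < α) (hα2 : α < 2) :
    ∃ C : ℝ, 0 < C ∧ ∀ (m : ℝ), 1 ≤ m → ∀ (n1 : ℕ), 1 ≤ n1 → (n1 : ℝ) ≤ m →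
      ∀ s : Finset ℕ,
        ∑ i ∈ s, ((2:ℝ) ^ (i + 1) * (n1 : ℝ)) ^ 2 *
            (c1 * ((2:ℝ) ^ ((i : ℝ) - 1) * (n1 : ℝ)) ^ (α - 2) *
              Real.exp (-c2 * ((2:ℝ) ^ ((i : ℝ) - 1) * (n1 : ℝ)) / m)) ≤
          C * m ^ α := by
  set b := min α 1 with hb
  have hb0 : 0 < b := lt_min hα0 one_pos
  have hb1 : b ≤ 1 := min_le_right _ _
  set q := (2:ℝ) ^ (-b) with hq
  have hq0 : 0 < q := Real.rpow_pos_of_pos two_pos _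
  have hq1 : q < 1 := Real.rpow_lt_one_of_one_lt_of_neg one_lt_two (by linarith)
  have h1q : 0 < 1 - q := by linarith
  set K := 2 + 27 / c2 ^ 3 with hK
  have hKpos : 0 < K := by positivity
  refine ⟨64 * c1 * K / (1 - q), by positivity, ?_⟩
  intro m hm n1 hn1 hn1m s
  set N := (n1 : ℝ) with hN
  have hN1 : 1 ≤ N := by rw [hN]; exact_mod_cast hn1
  have hN0 : 0 < N := by linarith
  have hm0 : 0 < m := by linarith
  set L := Real.logb 2 (2 * m / N) with hL
  have harg : 2 ≤ 2 * m / N := by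
    rw [le_div_iff₀ hN0]; nlinarith
  have harg0 : 0 < 2 * m / N := by linarith
  have hL0 : 0 ≤ L := Real.logb_nonneg one_lt_two (by linarith)
  have h2L : (2:ℝ) ^ L = 2 * m / N := Real.rpow_logb two_pos (by norm_num) harg0
  set j0 := ⌊L⌋₊ with hj0
  have hfl : (j0 : ℝ) ≤ L := Nat.floor_le hL0
  have hfu : L < j0 + 1 := Nat.lt_floor_add_one L
  have hmα : 0 < m ^ α := Real.rpow_pos_of_pos hm0 α
  -- per-term bound
  have key : ∀ i : ℕ, ((2:ℝ) ^ (i + 1) * N) ^ 2 *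
      (c1 * ((2:ℝ) ^ ((i : ℝ) - 1) * N) ^ (α - 2) *
        Real.exp (-c2 * ((2:ℝ) ^ ((i : ℝ) - 1) * N) / m)) ≤
      (32 * c1 * K * m ^ α) * q ^ Nat.dist i j0 := by
    intro i
    set X := (2:ℝ) ^ ((i : ℝ) - 1) * N with hX
    have hXpos : 0 < X := by
      apply mul_pos (Real.rpow_pos_of_pos two_pos _) hN0
    -- rewrite the prefactor
    have hpre : ((2:ℝ) ^ (i + 1) * N) ^ 2 = 16 * X ^ 2 := by
      have h1 : ((2:ℝ) ^ (i + 1) : ℝ) = (2:ℝ) ^ (((i : ℝ) + 1)) := by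
        rw [← Real.rpow_natCast (2:ℝ) (i + 1)]
        push_cast
        ring_nf
      have h2 : (2:ℝ) ^ (((i : ℝ) + 1)) = 4 * (2:ℝ) ^ ((i : ℝ) - 1) := by
        rw [show ((i : ℝ) + 1) = ((i : ℝ) - 1) + 2 by ring, Real.rpow_add two_pos]
        rw [show ((2:ℝ) ^ (2:ℝ)) = 4 by
          rw [show (2:ℝ) = ((2:ℕ):ℝ) by norm_num, Real.rpow_natCast]; norm_num]
        ring
      rw [h1, h2, hX]
      ring
    have hX2 : X ^ 2 * X ^ (α - 2) = X ^ α := by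
      rw [show X ^ 2 = X ^ ((2:ℕ):ℝ) by rw [Real.rpow_natCast]]
      rw [← Real.rpow_add hXpos]
      norm_num
    -- term = 16 c1 X^α exp(-c2 X/m)
    have hterm : ((2:ℝ) ^ (i + 1) * N) ^ 2 *
        (c1 * X ^ (α - 2) * Real.exp (-c2 * X / m)) =
        16 * c1 * (X ^ α * Real.exp (-c2 * X / m)) := by
      rw [hpre]
      rw [show 16 * X ^ 2 * (c1 * X ^ (α - 2) * Real.exp (-c2 * X / m))
          = 16 * c1 * ((X ^ 2 * X ^ (α - 2)) * Real.exp (-c2 * X / m)) by ring, hX2]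
    -- X / m = 2 ^ ((i:ℝ) - L)
    have hT : X / m = (2:ℝ) ^ (((i:ℝ) - L)) := by
      rw [Real.rpow_sub two_pos, h2L, hX]
      rw [Real.rpow_sub two_pos, Real.rpow_one, Real.rpow_natCast]
      field_simp
    have hXα : X ^ α = m ^ α * ((2:ℝ) ^ (((i:ℝ) - L))) ^ α := by
      rw [← hT, Real.div_rpow (le_of_lt hXpos) (le_of_lt hm0)]
      field_simp
    have hexp : -c2 * X / m = -c2 * (2:ℝ) ^ (((i:ℝ) - L)) := by
      rw [← hT]; ring
    have hg := g_bound c2 α hc2 hα0 hα2 ((i:ℝ) - L)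
    -- distance bound: 2 ^ (-b * |i - L|) ≤ 2 * q ^ Nat.dist i j0
    have hdistle : ((Nat.dist i j0 : ℕ) : ℝ) ≤ |(i:ℝ) - L| + 1 := by
      rcases le_total i j0 with hij | hij
      · rw [Nat.dist_eq_sub_of_le hij]
        have : ((j0 - i : ℕ) : ℝ) = (j0:ℝ) - i := by
          push_cast [Nat.cast_sub hij]; ring
        rw [this]
        have h1 : (j0:ℝ) - i ≤ L - i := by linarith
        have h2 : L - i ≤ |(i:ℝ) - L| := by
          rw [abs_sub_comm]; exact le_abs_self _
        linarith
      · rw [Nat.dist_eq_sub_of_le_right hij]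
        have : ((i - j0 : ℕ) : ℝ) = (i:ℝ) - j0 := by
          push_cast [Nat.cast_sub hij]; ring
        rw [this]
        have h2 : (i:ℝ) - L ≤ |(i:ℝ) - L| := le_abs_self _
        linarith
    have hdist2 : (2:ℝ) ^ (-b * |(i:ℝ) - L|) ≤ 2 * q ^ Nat.dist i j0 := by
      have hqd : (q : ℝ) ^ (Nat.dist i j0) = (2:ℝ) ^ (-b * (Nat.dist i j0 : ℝ)) := by
        rw [hq, ← Real.rpow_natCast ((2:ℝ) ^ (-b)) (Nat.dist i j0),
          ← Real.rpow_mul (by norm_num : (0:ℝ) ≤ 2)]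
      have h1 : (2:ℝ) ^ (-b * |(i:ℝ) - L|) ≤ (2:ℝ) ^ (b - b * (Nat.dist i j0 : ℝ)) := by
        apply Real.rpow_le_rpow_of_exponent_le one_le_two
        have hd1 : ((Nat.dist i j0 : ℕ) : ℝ) - 1 ≤ |(i:ℝ) - L| := by linarith [hdistle]
        have hmul := mul_le_mul_of_nonneg_left hd1 (le_of_lt hb0)
        rw [mul_sub, mul_one] at hmul
        linarith
      have h2 : (2:ℝ) ^ (b - b * (Nat.dist i j0 : ℝ))
          = (2:ℝ) ^ (b:ℝ) * (2:ℝ) ^ (-b * (Nat.dist i j0 : ℝ)) := by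
        rw [← Real.rpow_add two_pos]; ring_nf
      have h3 : (2:ℝ) ^ (b:ℝ) ≤ 2 := by
        calc (2:ℝ) ^ (b:ℝ) ≤ (2:ℝ) ^ (1:ℝ) :=
            Real.rpow_le_rpow_of_exponent_le one_le_two hb1
          _ = 2 := Real.rpow_one 2
      rw [hqd]
      calc (2:ℝ) ^ (-b * |(i:ℝ) - L|) ≤ (2:ℝ) ^ (b:ℝ) * (2:ℝ) ^ (-b * (Nat.dist i j0 : ℝ)) := by
            rw [← h2]; exact h1
        _ ≤ 2 * (2:ℝ) ^ (-b * (Nat.dist i j0 : ℝ)) := by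
            apply mul_le_mul_of_nonneg_right h3
              (le_of_lt (Real.rpow_pos_of_pos two_pos _))
    calc ((2:ℝ) ^ (i + 1) * N) ^ 2 *
        (c1 * X ^ (α - 2) * Real.exp (-c2 * X / m))
        = 16 * c1 * (X ^ α * Real.exp (-c2 * X / m)) := hterm
      _ = 16 * c1 * m ^ α * (((2:ℝ) ^ (((i:ℝ) - L))) ^ α *
          Real.exp (-c2 * (2:ℝ) ^ (((i:ℝ) - L)))) := by
          rw [hXα, hexp]; ring
      _ ≤ 16 * c1 * m ^ α * (K * (2:ℝ) ^ (-b * |(i:ℝ) - L|)) := by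
          apply mul_le_mul_of_nonneg_left hg (by positivity)
      _ ≤ 16 * c1 * m ^ α * (K * (2 * q ^ Nat.dist i j0)) := by
          apply mul_le_mul_of_nonneg_left _ (by positivity)
          apply mul_le_mul_of_nonneg_left hdist2 (le_of_lt hKpos)
      _ = (32 * c1 * K * m ^ α) * q ^ Nat.dist i j0 := by ring
  calc ∑ i ∈ s, ((2:ℝ) ^ (i + 1) * N) ^ 2 *
      (c1 * ((2:ℝ) ^ ((i : ℝ) - 1) * N) ^ (α - 2) *
        Real.exp (-c2 * ((2:ℝ) ^ ((i : ℝ) - 1) * N) / m))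
      ≤ ∑ i ∈ s, (32 * c1 * K * m ^ α) * q ^ Nat.dist i j0 :=
        Finset.sum_le_sum fun i _ => key i
    _ = (32 * c1 * K * m ^ α) * ∑ i ∈ s, q ^ Nat.dist i j0 := by
        rw [Finset.mul_sum]
    _ ≤ (32 * c1 * K * m ^ α) * (2 / (1 - q)) := by
        apply mul_le_mul_of_nonneg_left
          (geom_dist_sum q (le_of_lt hq0) hq1 j0 s) (by positivity)
    _ = 64 * c1 * K / (1 - q) * m ^ α := by
        field_simp
        ring
end

section
/- Let c1, c2 > 0, 0 < α < 2, and m ≥ 1. Define ρ(r) = c1 · r^(α−2) · e^(−c2·r/m) for r ≥ 1. Then there exist constants C, C' > 0 depending only on c1, c2, α such that for all integers n1 > m, Σ_{i≥0} (2^(i+1)·n1)^2 · ρ(2^(i−1)·n1) ≤ C · m^α · e^(−C'·n1/m). -/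
private lemma exp_neg_le_cube {y : ℝ} (hy : 0 < y) : Real.exp (-y) ≤ 27 / y ^ 3 := by
  have h1 : y / 3 ≤ Real.exp (y / 3) := by
    have := Real.add_one_le_exp (y / 3); linarith
  have h2 : (y / 3) ^ 3 ≤ Real.exp (y / 3) ^ 3 := pow_le_pow_left₀ (by positivity) h1 3
  have h3 : Real.exp (y / 3) ^ 3 = Real.exp y := by
    rw [← Real.exp_nat_mul]; congr 1; push_cast; ring
  have h4 : y ^ 3 ≤ 27 * Real.exp y := by nlinarith [h2, h3]
  rw [Real.exp_neg, le_div_iff₀ (by positivity : (0:ℝ) < y ^ 3),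
    inv_mul_le_iff₀ (Real.exp_pos y)]
  linarith

private lemma exp_neg_le_sq {y : ℝ} (hy : 0 < y) : Real.exp (-y) ≤ 4 / y ^ 2 := by
  have h1 : y / 2 ≤ Real.exp (y / 2) := by
    have := Real.add_one_le_exp (y / 2); linarith
  have h2 : (y / 2) ^ 2 ≤ Real.exp (y / 2) ^ 2 := pow_le_pow_left₀ (by positivity) h1 2
  have h3 : Real.exp (y / 2) ^ 2 = Real.exp y := by
    rw [← Real.exp_nat_mul]; congr 1; push_cast; ring
  have h4 : y ^ 2 ≤ 4 * Real.exp y := by nlinarith [h2, h3]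
  rw [Real.exp_neg, le_div_iff₀ (by positivity : (0:ℝ) < y ^ 2),
    inv_mul_le_iff₀ (Real.exp_pos y)]
  linarith

private lemma key_term (c1 c2 α : ℝ) (hc1 : 0 < c1) (hc2 : 0 < c2) (hα0 : 0 < α) (hα2 : α < 2)
    (m : ℝ) (hm : 1 ≤ m) (n : ℝ) (hn : m < n) (i : ℕ) :
    ((2:ℝ) ^ (i + 1) * n) ^ 2 *
        (c1 * ((2:ℝ) ^ ((i : ℝ) - 1) * n) ^ (α - 2) *
          Real.exp (-c2 * ((2:ℝ) ^ ((i : ℝ) - 1) * n) / m)) ≤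
      (7077888 * c1 / c2 ^ 5) * ((1:ℝ)/2) ^ i * (m ^ α * Real.exp (-(c2/8) * n / m)) := by
  have hm0 : (0:ℝ) < m := lt_of_lt_of_le one_pos hm
  have hn1 : (1:ℝ) < n := lt_of_le_of_lt hm hn
  have hn0 : (0:ℝ) < n := by linarith
  set p : ℝ := (2:ℝ) ^ i with hp
  have hp0 : (0:ℝ) < p := by positivity
  have hp1 : (1:ℝ) ≤ p := one_le_pow₀ (by norm_num)
  have hx : (2:ℝ) ^ ((i : ℝ) - 1) = p / 2 := by
    rw [Real.rpow_sub two_pos, Real.rpow_one, Real.rpow_natCast]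
  -- bound for the base-2 rpow factor
  have hB2 : ((2:ℝ) ^ ((i : ℝ) - 1)) ^ (α - 2) ≤ 4 := by
    rw [← Real.rpow_mul (by norm_num : (0:ℝ) ≤ 2)]
    calc (2:ℝ) ^ (((i:ℝ) - 1) * (α - 2)) ≤ (2:ℝ) ^ (2:ℝ) := by
          apply Real.rpow_le_rpow_of_exponent_le one_le_two
          rcases Nat.eq_zero_or_pos i with h | h
          · simp [h]; nlinarith
          · have : (1:ℝ) ≤ (i:ℝ) := by exact_mod_cast h
            nlinarith
      _ = 4 := by
          rw [show (2:ℝ) = ((2:ℕ):ℝ) by norm_num, Real.rpow_natCast]; norm_num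
  have hsplit : ((2:ℝ) ^ ((i : ℝ) - 1) * n) ^ (α - 2)
      = ((2:ℝ) ^ ((i : ℝ) - 1)) ^ (α - 2) * (n ^ α / n ^ 2) := by
    rw [Real.mul_rpow (by positivity) hn0.le]
    congr 1
    rw [Real.rpow_sub hn0]
    congr 1
    rw [show (2:ℝ) = ((2:ℕ):ℝ) by norm_num, Real.rpow_natCast]
  -- bound for the exponential factor
  have hE : Real.exp (-c2 * ((2:ℝ) ^ ((i : ℝ) - 1) * n) / m)
      ≤ (1728 / (c2 ^ 3 * p ^ 3)) * Real.exp (-(c2/4) * (n/m)) := by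
    have harg : -c2 * ((2:ℝ) ^ ((i : ℝ) - 1) * n) / m
        = (-(c2 * p * n / (4 * m))) + (-(c2 * p * n / (4 * m))) := by
      rw [hx]; field_simp; ring
    rw [harg, Real.exp_add]
    have hone : (1:ℝ) ≤ n / m := (one_le_div hm0).mpr hn.le
    have hf1 : Real.exp (-(c2 * p * n / (4 * m))) ≤ 1728 / (c2 ^ 3 * p ^ 3) := by
      have hle : c2 * p / 4 ≤ c2 * p * n / (4 * m) := by
        have : c2 * p / 4 * 1 ≤ c2 * p / 4 * (n / m) :=
          mul_le_mul_of_nonneg_left hone (by positivity)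
        calc c2 * p / 4 = c2 * p / 4 * 1 := by ring
          _ ≤ c2 * p / 4 * (n / m) := this
          _ = c2 * p * n / (4 * m) := by field_simp
      calc Real.exp (-(c2 * p * n / (4 * m))) ≤ Real.exp (-(c2 * p / 4)) := by
            apply Real.exp_le_exp.mpr; linarith
        _ ≤ 27 / (c2 * p / 4) ^ 3 := exp_neg_le_cube (by positivity)
        _ = 1728 / (c2 ^ 3 * p ^ 3) := by field_simp; ring
    have hf2 : Real.exp (-(c2 * p * n / (4 * m))) ≤ Real.exp (-(c2/4) * (n/m)) := by
      apply Real.exp_le_exp.mpr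
      have : c2 * (n / m) / 4 * 1 ≤ c2 * (n / m) / 4 * p :=
        mul_le_mul_of_nonneg_left hp1 (by positivity)
      have h1 : c2 / 4 * (n / m) ≤ c2 * p * n / (4 * m) := by
        calc c2 / 4 * (n / m) = c2 * (n / m) / 4 * 1 := by ring
          _ ≤ c2 * (n / m) / 4 * p := this
          _ = c2 * p * n / (4 * m) := by field_simp
      linarith
    exact mul_le_mul hf1 hf2 (Real.exp_pos _).le (by positivity)
  -- bound for n^α * exp(-(c2/4) t)
  have hT : n ^ α * Real.exp (-(c2/4) * (n/m))
      ≤ (256 / c2 ^ 2) * (m ^ α * Real.exp (-(c2/8) * n / m)) := by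
    set t : ℝ := n / m with ht
    have ht1 : (1:ℝ) < t := (one_lt_div hm0).mpr hn
    have ht0 : (0:ℝ) < t := by linarith
    have hnmt : n = m * t := by rw [ht]; field_simp
    have hna : n ^ α = m ^ α * t ^ α := by
      rw [hnmt, Real.mul_rpow hm0.le ht0.le]
    have hta : t ^ α ≤ t ^ 2 := by
      calc t ^ α ≤ t ^ (2:ℝ) := Real.rpow_le_rpow_of_exponent_le ht1.le (le_of_lt hα2)
        _ = t ^ 2 := by
          rw [show (2:ℝ) = ((2:ℕ):ℝ) by norm_num, Real.rpow_natCast]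
    have hexp_split : Real.exp (-(c2/4) * t)
        = Real.exp (-(c2 * t / 8)) * Real.exp (-(c2/8) * n / m) := by
      rw [← Real.exp_add]
      congr 1
      rw [ht]; ring
    have hsq : Real.exp (-(c2 * t / 8)) ≤ 256 / (c2 ^ 2 * t ^ 2) := by
      calc Real.exp (-(c2 * t / 8)) ≤ 4 / (c2 * t / 8) ^ 2 := exp_neg_le_sq (by positivity)
        _ = 256 / (c2 ^ 2 * t ^ 2) := by field_simp; ring
    calc n ^ α * Real.exp (-(c2/4) * t)
        = m ^ α * t ^ α * (Real.exp (-(c2 * t / 8)) * Real.exp (-(c2/8) * n / m)) := by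
          rw [hna, hexp_split]
      _ ≤ m ^ α * t ^ 2 * ((256 / (c2 ^ 2 * t ^ 2)) * Real.exp (-(c2/8) * n / m)) := by
          apply mul_le_mul (by gcongr <;> positivity)
            (by gcongr <;> positivity) (by positivity) (by positivity)
      _ = (256 / c2 ^ 2) * (m ^ α * Real.exp (-(c2/8) * n / m)) := by
          field_simp
  -- assemble
  have hE0 : (0:ℝ) ≤ Real.exp (-c2 * ((2:ℝ) ^ ((i : ℝ) - 1) * n) / m) := (Real.exp_pos _).le
  have hq0 : (0:ℝ) ≤ n ^ α / n ^ 2 := by positivity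
  calc ((2:ℝ) ^ (i + 1) * n) ^ 2 *
        (c1 * ((2:ℝ) ^ ((i : ℝ) - 1) * n) ^ (α - 2) *
          Real.exp (-c2 * ((2:ℝ) ^ ((i : ℝ) - 1) * n) / m))
      = (4 * p ^ 2 * n ^ 2) *
        (c1 * (((2:ℝ) ^ ((i : ℝ) - 1)) ^ (α - 2) * (n ^ α / n ^ 2)) *
          Real.exp (-c2 * ((2:ℝ) ^ ((i : ℝ) - 1) * n) / m)) := by
        rw [hsplit, pow_succ]
        ring
    _ ≤ (4 * p ^ 2 * n ^ 2) *
        (c1 * (4 * (n ^ α / n ^ 2)) *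
          ((1728 / (c2 ^ 3 * p ^ 3)) * Real.exp (-(c2/4) * (n/m)))) := by
        apply mul_le_mul_of_nonneg_left _ (by positivity)
        apply mul_le_mul _ hE hE0 (by positivity)
        apply mul_le_mul_of_nonneg_left _ hc1.le
        exact mul_le_mul_of_nonneg_right hB2 hq0
    _ = (27648 * c1 / c2 ^ 3) * ((1:ℝ)/2) ^ i * (n ^ α * Real.exp (-(c2/4) * (n/m))) := by
        have hpi : ((1:ℝ)/2) ^ i = 1 / p := by
          rw [hp, div_pow, one_pow]
        rw [hpi]
        field_simp
        ring
    _ ≤ (27648 * c1 / c2 ^ 3) * ((1:ℝ)/2) ^ i *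
          ((256 / c2 ^ 2) * (m ^ α * Real.exp (-(c2/8) * n / m))) := by
        exact mul_le_mul_of_nonneg_left hT (by positivity)
    _ = (7077888 * c1 / c2 ^ 5) * ((1:ℝ)/2) ^ i * (m ^ α * Real.exp (-(c2/8) * n / m)) := by
        field_simp
        ring

theorem stmt_1 (c1 c2 α : ℝ) (hc1 : 0 < c1) (hc2 : 0 < c2) (hα0 : 0 < α) (hα2 : α < 2) :
    ∃ C : ℝ, 0 < C ∧ ∃ C' : ℝ, 0 < C' ∧ ∀ (m : ℝ), 1 ≤ m → ∀ (n1 : ℕ), m < (n1 : ℝ) →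
      ∀ s : Finset ℕ,
        ∑ i ∈ s, ((2:ℝ) ^ (i + 1) * (n1 : ℝ)) ^ 2 *
            (c1 * ((2:ℝ) ^ ((i : ℝ) - 1) * (n1 : ℝ)) ^ (α - 2) *
              Real.exp (-c2 * ((2:ℝ) ^ ((i : ℝ) - 1) * (n1 : ℝ)) / m)) ≤
          C * m ^ α * Real.exp (-C' * (n1 : ℝ) / m) := by
  refine ⟨14155776 * c1 / c2 ^ 5, by positivity, c2 / 8, by positivity, ?_⟩
  intro m hm n1 hn s
  have hsum : ∑ i ∈ s, ((1:ℝ)/2) ^ i ≤ 2 := by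
    have h1 : ∑ i ∈ s, ((1:ℝ)/2) ^ i ≤ ∑' i : ℕ, ((1:ℝ)/2) ^ i :=
      Summable.sum_le_tsum s (fun i _ => by positivity)
        (summable_geometric_of_lt_one (by norm_num) (by norm_num))
    have h2 : ∑' i : ℕ, ((1:ℝ)/2) ^ i = 2 := by
      rw [tsum_geometric_of_lt_one (by norm_num) (by norm_num)]
      norm_num
    linarith
  calc ∑ i ∈ s, ((2:ℝ) ^ (i + 1) * (n1 : ℝ)) ^ 2 *
            (c1 * ((2:ℝ) ^ ((i : ℝ) - 1) * (n1 : ℝ)) ^ (α - 2) *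
              Real.exp (-c2 * ((2:ℝ) ^ ((i : ℝ) - 1) * (n1 : ℝ)) / m))
      ≤ ∑ i ∈ s, (7077888 * c1 / c2 ^ 5) * ((1:ℝ)/2) ^ i *
          (m ^ α * Real.exp (-(c2/8) * (n1:ℝ) / m)) :=
        Finset.sum_le_sum fun i _ => key_term c1 c2 α hc1 hc2 hα0 hα2 m hm (n1:ℝ) hn i
    _ = (7077888 * c1 / c2 ^ 5) * (m ^ α * Real.exp (-(c2/8) * (n1:ℝ) / m)) *
          ∑ i ∈ s, ((1:ℝ)/2) ^ i := by
        rw [Finset.mul_sum]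
        exact Finset.sum_congr rfl fun i _ => by ring
    _ ≤ (7077888 * c1 / c2 ^ 5) * (m ^ α * Real.exp (-(c2/8) * (n1:ℝ) / m)) * 2 := by
        apply mul_le_mul_of_nonneg_left hsum (by positivity)
    _ = 14155776 * c1 / c2 ^ 5 * m ^ α * Real.exp (-(c2 / 8) * (n1:ℝ) / m) := by ring
end

section
/- Let β > α > 0 and let ρ : [1, ∞) → [0, 1] satisfy ρ(r) ≤ c1·r^(α−2)·e^(−c2·r/m) and suppose each vertex v of a planar lattice independently carries a hole of radius r_v ~ ρ with probability at most c3·m^(−β). Let B(n1, n2, z) denote the event that some hole H_v satisfies: H_v intersects both ∂B_{n1}(z) and ∂B_{n2}(z), does not contain B_{n1}(z), and does not intersect ∂B_{2n2}(z). Then there exist constants C, C' > 0 (depending only on c1, c2, c3, α, β) such that for all m ≥ 1, all z, and all 1 ≤ n1 ≤ n2/2: P(B(n1, n2, z)) ≤ C·m^(−β)·n1·n2^(α−1)·e^(−C'·n2/m). -/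
set_option linter.all false


open MeasureTheory

/-- L∞ distance between two vertices of the lattice ℤ². -/
def linfDist (a b : ℤ × ℤ) : ℤ := max |a.1 - b.1| |a.2 - b.2|

lemma linf_comm (a b : ℤ × ℤ) : linfDist a b = linfDist b a := by
  simp only [linfDist, Int.abs_eq_natAbs]; omega

lemma linf_triangle (a b c : ℤ × ℤ) : linfDist a c ≤ linfDist a b + linfDist b c := by
  simp only [linfDist, Int.abs_eq_natAbs]; omega

lemma linf_rev (a b c : ℤ × ℤ) : |linfDist a c - linfDist b c| ≤ linfDist a b := by
  simp only [linfDist, Int.abs_eq_natAbs]; omega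

lemma exists_on_sphere (z v : ℤ × ℤ) (R : ℤ) (hR : 0 ≤ R) :
    ∃ w : ℤ × ℤ, linfDist w z = R ∧ linfDist w v ≤ |linfDist v z - R| := by
  refine ⟨(z.1 + (if R ≤ max |v.1-z.1| |v.2-z.2| then max (-R) (min R (v.1-z.1)) else
      if |v.2-z.2| ≤ |v.1-z.1| then (if 0 ≤ v.1-z.1 then R else -R) else v.1-z.1),
      z.2 + (if R ≤ max |v.1-z.1| |v.2-z.2| then max (-R) (min R (v.2-z.2)) else
      if |v.2-z.2| ≤ |v.1-z.1| then v.2-z.2 else (if 0 ≤ v.2-z.2 then R else -R))), ?_, ?_⟩ <;>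
    simp only [linfDist, Int.abs_eq_natAbs] <;> split_ifs <;> omega

set_option maxHeartbeats 2000000 in
/-- Lemma 3.3: the probability that some hole crosses the annulus `Ann_{n1,n2}(z)` maximally
(touching both spheres, not containing the inner ball, not touching the sphere of radius 2·n2)
is at most `C·m^(−β)·n1·n2^(α−1)·e^(−C'·n2/m)`. A hole is centered at a vertex `v` (event `I v`)
and is the L∞ ball of radius `r v`, whose distribution is dominated by `c3·m^(−β)·ν` where the
tail of `ν` satisfies the heavy-tailed bound with exponential cutoff. -/
theorem stmt_9 (c1 c2 c3 α β : ℝ) (hc1 : 0 < c1) (hc2 : 0 < c2) (hc3 : 0 < c3)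
    (hα : 0 < α) (hα2 : α < 2) (hαβ : α < β) :
    ∃ C : ℝ, 0 < C ∧ ∃ C' : ℝ, 0 < C' ∧
      ∀ (m : ℝ), 1 ≤ m →
      ∀ (Ω : Type) [MeasurableSpace Ω] (μ : Measure Ω), IsProbabilityMeasure μ →
      ∀ (I : ℤ × ℤ → Ω → Prop) (r : ℤ × ℤ → Ω → ℝ) (ν : Measure ℝ),
        IsProbabilityMeasure ν →
        (∀ t : ℝ, 1 ≤ t →
          ν (Set.Ici t) ≤ ENNReal.ofReal (c1 * t ^ (α - 2) * Real.exp (-c2 * t / m))) →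
        (∀ (v : ℤ × ℤ) (S : Set ℝ), MeasurableSet S →
          μ {ω | I v ω ∧ r v ω ∈ S} ≤ ENNReal.ofReal (c3 * m ^ (-β)) * ν S) →
        ∀ (z : ℤ × ℤ) (n1 n2 : ℕ), 1 ≤ n1 → 2 * n1 ≤ n2 →
          μ {ω | ∃ v : ℤ × ℤ, I v ω ∧
              (∃ w : ℤ × ℤ, linfDist w z = (n1 : ℤ) ∧ (linfDist w v : ℝ) ≤ r v ω) ∧
              (∃ w : ℤ × ℤ, linfDist w z = (n2 : ℤ) ∧ (linfDist w v : ℝ) ≤ r v ω) ∧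
              ¬ (∀ w : ℤ × ℤ, linfDist w z ≤ (n1 : ℤ) → (linfDist w v : ℝ) ≤ r v ω) ∧
              ¬ (∃ w : ℤ × ℤ, linfDist w z = (2 * n2 : ℤ) ∧ (linfDist w v : ℝ) ≤ r v ω)} ≤
            ENNReal.ofReal
              (C * m ^ (-β) * (n1 : ℝ) * (n2 : ℝ) ^ (α - 1) * Real.exp (-C' * (n2 : ℝ) / m)) := by
  classical
  set c4 : ℝ := max (c1 * 4 ^ (2 - α)) (3 ^ (2 - α) * Real.exp (3 * c2 / 4)) with hc4
  have hc4pos : 0 < c4 := lt_of_lt_of_le (by positivity) (le_max_left _ _)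
  refine ⟨32 * c3 * c4, by positivity, c2 / 4, by positivity, ?_⟩
  intro m hm Ω _ μ hμ I r ν hν htail hdom z n1 n2 hn1 hn12
  have hmpos : (0:ℝ) < m := lt_of_lt_of_le one_pos hm
  have hn2 : (2:ℕ) ≤ n2 := le_trans (by omega) hn12
  have hn2R : (0:ℝ) < (n2:ℝ) := by positivity
  set d : ℤ × ℤ → ℤ := fun v => linfDist v z with hd
  set S : ℤ × ℤ → Set ℝ := fun v =>
    Set.Ici ((max |d v - (n1:ℤ)| |d v - (n2:ℤ)| : ℤ) : ℝ) ∩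
    Set.Iio ((min (d v + (n1:ℤ)) (2 * (n2:ℤ) - d v) : ℤ) : ℝ) with hS
  have hSm : ∀ v, MeasurableSet (S v) := fun v => measurableSet_Ici.inter measurableSet_Iio
  set K : ℕ := 32 * n1 * n2 with hK
  -- Step 1 : union bound with the radius constraints
  have step1 : μ {ω | ∃ v : ℤ × ℤ, I v ω ∧
              (∃ w : ℤ × ℤ, linfDist w z = (n1 : ℤ) ∧ (linfDist w v : ℝ) ≤ r v ω) ∧
              (∃ w : ℤ × ℤ, linfDist w z = (n2 : ℤ) ∧ (linfDist w v : ℝ) ≤ r v ω) ∧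
              ¬ (∀ w : ℤ × ℤ, linfDist w z ≤ (n1 : ℤ) → (linfDist w v : ℝ) ≤ r v ω) ∧
              ¬ (∃ w : ℤ × ℤ, linfDist w z = (2 * n2 : ℤ) ∧ (linfDist w v : ℝ) ≤ r v ω)} ≤
      ENNReal.ofReal (c3 * m ^ (-β)) * ∑' v : ℤ × ℤ, ν (S v) := by
    have hincl : {ω | ∃ v : ℤ × ℤ, I v ω ∧
              (∃ w : ℤ × ℤ, linfDist w z = (n1 : ℤ) ∧ (linfDist w v : ℝ) ≤ r v ω) ∧
              (∃ w : ℤ × ℤ, linfDist w z = (n2 : ℤ) ∧ (linfDist w v : ℝ) ≤ r v ω) ∧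
              ¬ (∀ w : ℤ × ℤ, linfDist w z ≤ (n1 : ℤ) → (linfDist w v : ℝ) ≤ r v ω) ∧
              ¬ (∃ w : ℤ × ℤ, linfDist w z = (2 * n2 : ℤ) ∧ (linfDist w v : ℝ) ≤ r v ω)} ⊆
        ⋃ v : ℤ × ℤ, {ω | I v ω ∧ r v ω ∈ S v} := by
      rintro ω ⟨v, hI, ⟨w1, hw1z, hw1r⟩, ⟨w2, hw2z, hw2r⟩, h3, h4⟩
      have hA1 : |d v - (n1:ℤ)| ≤ linfDist w1 v := by
        have := linf_rev v w1 z
        rw [hw1z, linf_comm v w1] at this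
        exact this
      have hA2 : |d v - (n2:ℤ)| ≤ linfDist w2 v := by
        have := linf_rev v w2 z
        rw [hw2z, linf_comm v w2] at this
        exact this
      have hA1R : ((|d v - (n1:ℤ)| : ℤ) : ℝ) ≤ r v ω :=
        le_trans (Int.cast_le.mpr hA1) hw1r
      have hA2R : ((|d v - (n2:ℤ)| : ℤ) : ℝ) ≤ r v ω :=
        le_trans (Int.cast_le.mpr hA2) hw2r
      refine Set.mem_iUnion.mpr ⟨v, hI, ?_, ?_⟩
      · show ((max |d v - (n1:ℤ)| |d v - (n2:ℤ)| : ℤ) : ℝ) ≤ r v ω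
        rw [Int.cast_max]
        exact max_le hA1R hA2R
      · show r v ω < ((min (d v + (n1:ℤ)) (2 * (n2:ℤ) - d v) : ℤ) : ℝ)
        rw [Int.cast_min]
        refine lt_min ?_ ?_
        · push_neg at h3
          obtain ⟨w, hwz, hwr⟩ := h3
          have hle : linfDist w v ≤ d v + (n1:ℤ) := by
            calc linfDist w v ≤ linfDist w z + linfDist z v := linf_triangle w z v
              _ ≤ (n1:ℤ) + d v := by
                  rw [linf_comm z v]; exact add_le_add hwz le_rfl
              _ = d v + (n1:ℤ) := by ring
          exact lt_of_lt_of_le hwr (Int.cast_le.mpr hle)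
        · obtain ⟨w, hwz, hwv⟩ := exists_on_sphere z v (2 * (n2:ℤ)) (by positivity)
          have hnot : r v ω < (linfDist w v : ℝ) := by
            by_contra hcon
            push_neg at hcon
            exact h4 ⟨w, hwz, hcon⟩
          have hwv' : r v ω < ((|d v - 2 * (n2:ℤ)| : ℤ) : ℝ) :=
            lt_of_lt_of_le hnot (Int.cast_le.mpr hwv)
          rcases le_or_gt (d v) (2 * (n2:ℤ)) with hcase | hcase
          · have : |d v - 2 * (n2:ℤ)| = 2 * (n2:ℤ) - d v := by
              rw [abs_of_nonpos (by omega)]; ring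
            rw [this] at hwv'
            exact hwv'
          · exfalso
            have h1 : |d v - (n2:ℤ)| = d v - (n2:ℤ) := abs_of_nonneg (by omega)
            have h2 : |d v - 2 * (n2:ℤ)| = d v - 2 * (n2:ℤ) := abs_of_nonneg (by omega)
            rw [h1] at hA2R
            rw [h2] at hwv'
            have hn2z : (1:ℤ) ≤ (n2:ℤ) := by exact_mod_cast le_trans (by norm_num) hn2
            have : ((d v - (n2:ℤ) : ℤ) : ℝ) < ((d v - 2 * (n2:ℤ) : ℤ) : ℝ) :=
              lt_of_le_of_lt hA2R hwv'
            rw [Int.cast_lt] at this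
            omega
    refine le_trans (measure_mono hincl) ?_
    refine le_trans (measure_iUnion_le _) ?_
    calc ∑' v : ℤ × ℤ, μ {ω | I v ω ∧ r v ω ∈ S v}
        ≤ ∑' v : ℤ × ℤ, ENNReal.ofReal (c3 * m ^ (-β)) * ν (S v) :=
          ENNReal.tsum_le_tsum fun v => hdom v (S v) (hSm v)
      _ = ENNReal.ofReal (c3 * m ^ (-β)) * ∑' v : ℤ × ℤ, ν (S v) := ENNReal.tsum_mul_left
  -- Step 2 : counting
  have hcount : ∀ t : ℝ, (∑' v : ℤ × ℤ, (S v).indicator (fun _ => (1:ENNReal)) t) ≤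
      (Set.Ici ((n2:ℝ)/4)).indicator (fun _ => (K : ENNReal)) t := by
    intro t
    by_cases ht : (n2:ℝ)/4 ≤ t
    · -- count the vertices
      set F : ℤ := ⌊t⌋ with hF
      have hF0 : 0 ≤ F := Int.le_floor.mpr (by exact_mod_cast le_trans (by positivity) ht)
      set L : ℤ := max (F - (n1:ℤ) + 1) ((n2:ℤ) - F) with hL
      set B : ℤ := min (F + (n1:ℤ)) (2 * (n2:ℤ) - F - 1) with hB
      have hL1 : 1 ≤ L := by
        have h1 : (1:ℤ) ≤ (n1:ℤ) := by exact_mod_cast hn1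
        have h2 : 2 * (n1:ℤ) ≤ (n2:ℤ) := by exact_mod_cast hn12
        omega
      set T : Finset (ℤ × ℤ) :=
        (Finset.Icc (z.1 - B) (z.1 + B) ×ˢ Finset.Icc (z.2 - B) (z.2 + B)) \
        (Finset.Icc (z.1 - (L-1)) (z.1 + (L-1)) ×ˢ Finset.Icc (z.2 - (L-1)) (z.2 + (L-1)))
        with hT
      have hmemT : ∀ v : ℤ × ℤ, t ∈ S v → v ∈ T := by
        intro v hv
        obtain ⟨hlo, hhi⟩ := hv
        have hmax : max |d v - (n1:ℤ)| |d v - (n2:ℤ)| ≤ F := Int.le_floor.mpr hlo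
        have hmin : F < min (d v + (n1:ℤ)) (2 * (n2:ℤ) - d v) := by
          rw [show (F < (d v + (n1:ℤ)) ⊓ (2 * (n2:ℤ) - d v)) ↔ ((F:ℝ) < (((d v + (n1:ℤ)) ⊓ (2 * (n2:ℤ) - d v) : ℤ) : ℝ)) from (Int.cast_lt).symm]
          exact lt_of_le_of_lt (Int.floor_le t) hhi
        have hdv : d v = max |v.1 - z.1| |v.2 - z.2| := rfl
        rw [hdv] at hmax hmin
        simp only [hT, Finset.mem_sdiff, Finset.mem_product, Finset.mem_Icc, not_and]
        simp only [Int.abs_eq_natAbs] at hmax hmin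
        omega
      have cardT : T.card ≤ K := by
        rcases le_or_gt L B with hLB | hLB
        · have hsub : (Finset.Icc (z.1 - (L-1)) (z.1 + (L-1)) ×ˢ
              Finset.Icc (z.2 - (L-1)) (z.2 + (L-1))) ⊆
              (Finset.Icc (z.1 - B) (z.1 + B) ×ˢ Finset.Icc (z.2 - B) (z.2 + B)) :=
            Finset.product_subset_product
              (Finset.Icc_subset_Icc (by omega) (by omega))
              (Finset.Icc_subset_Icc (by omega) (by omega))
          rw [hT, Finset.card_sdiff_of_subset hsub]
          rw [Finset.card_product, Finset.card_product]
          rw [Int.card_Icc, Int.card_Icc, Int.card_Icc, Int.card_Icc]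
          have e1 : z.1 + B + 1 - (z.1 - B) = 2*B+1 := by ring
          have e2 : z.2 + B + 1 - (z.2 - B) = 2*B+1 := by ring
          have e3 : z.1 + (L-1) + 1 - (z.1 - (L-1)) = 2*L-1 := by ring
          have e4 : z.2 + (L-1) + 1 - (z.2 - (L-1)) = 2*L-1 := by ring
          rw [e1, e2, e3, e4]
          have hBpos : (0:ℤ) ≤ 2*B+1 := by omega
          have hLpos : (0:ℤ) ≤ 2*L-1 := by omega
          have hd1 : B - L + 1 ≤ 2 * (n1:ℤ) := by
            have : L ≥ F - (n1:ℤ) + 1 := le_max_left _ _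
            have : B ≤ F + (n1:ℤ) := min_le_left _ _
            omega
          have hd2 : B ≤ 2 * (n2:ℤ) - 1 := by
            have : B ≤ 2 * (n2:ℤ) - F - 1 := min_le_right _ _
            omega
          rw [Nat.sub_le_iff_le_add]
          zify
          rw [Int.toNat_of_nonneg hBpos, Int.toNat_of_nonneg hLpos]
          push_cast [hK]
          nlinarith [hL1, hLB, hd1, hd2, hn1, hn12]
        · have hempty : T = ∅ := by
            rw [hT, Finset.sdiff_eq_empty_iff_subset]
            exact Finset.product_subset_product
              (Finset.Icc_subset_Icc (by omega) (by omega))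
              (Finset.Icc_subset_Icc (by omega) (by omega))
          rw [hempty]; simp
      have hzero : ∀ v : ℤ × ℤ, v ∉ T → (S v).indicator (fun _ => (1:ENNReal)) t = 0 := by
        intro v hv
        apply Set.indicator_of_notMem
        intro hmem
        exact hv (hmemT v hmem)
      rw [tsum_eq_sum hzero]
      have : ∑ v ∈ T, (S v).indicator (fun _ => (1:ENNReal)) t ≤ ∑ v ∈ T, 1 :=
        Finset.sum_le_sum fun v _ => Set.indicator_apply_le (fun _ => le_rfl)
      refine le_trans this ?_
      rw [Set.indicator_of_mem (s := Set.Ici ((n2:ℝ)/4)) ht]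
      simp only [Finset.sum_const, nsmul_eq_mul, mul_one]
      exact Nat.cast_le.mpr cardT
    · -- below the threshold : every indicator vanishes
      have : ∀ v : ℤ × ℤ, (S v).indicator (fun _ => (1:ENNReal)) t = 0 := by
        intro v
        apply Set.indicator_of_notMem
        rintro ⟨hlo, -⟩
        have h1 : ((n2:ℤ) - d v : ℤ) ≤ max |d v - (n1:ℤ)| |d v - (n2:ℤ)| := by
          have : (n2:ℤ) - d v ≤ |d v - (n2:ℤ)| := by
            rw [abs_sub_comm]; exact le_abs_self _
          exact le_trans this (le_max_right _ _)
        have h2 : (d v - (n1:ℤ) : ℤ) ≤ max |d v - (n1:ℤ)| |d v - (n2:ℤ)| := by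
          exact le_trans (le_abs_self _) (le_max_left _ _)
        have h1R : (((n2:ℤ) - d v : ℤ) : ℝ) ≤ t := le_trans (Int.cast_le.mpr h1) hlo
        have h2R : ((d v - (n1:ℤ) : ℤ) : ℝ) ≤ t := le_trans (Int.cast_le.mpr h2) hlo
        push_cast at h1R h2R
        have hcast : 2 * (n1:ℝ) ≤ (n2:ℝ) := by exact_mod_cast hn12
        push_neg at ht
        linarith
      simp only [this, tsum_zero]
      exact zero_le
  have step2 : (∑' v : ℤ × ℤ, ν (S v)) ≤ (K : ENNReal) * ν (Set.Ici ((n2:ℝ)/4)) := by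
    calc ∑' v : ℤ × ℤ, ν (S v)
        = ∑' v : ℤ × ℤ, ∫⁻ t, (S v).indicator (fun _ => (1:ENNReal)) t ∂ν := by
          refine tsum_congr fun v => ?_
          rw [lintegral_indicator_const (hSm v), one_mul]
      _ = ∫⁻ t, ∑' v : ℤ × ℤ, (S v).indicator (fun _ => (1:ENNReal)) t ∂ν :=
          (lintegral_tsum fun v => ((measurable_const.indicator (hSm v)).aemeasurable)).symm
      _ ≤ ∫⁻ t, (Set.Ici ((n2:ℝ)/4)).indicator (fun _ => (K : ENNReal)) t ∂ν :=
          lintegral_mono hcount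
      _ = (K : ENNReal) * ν (Set.Ici ((n2:ℝ)/4)) :=
          lintegral_indicator_const measurableSet_Ici _
  -- Step 3 : the tail bound
  have step3 : ν (Set.Ici ((n2:ℝ)/4)) ≤
      ENNReal.ofReal (c4 * (n2:ℝ) ^ (α - 2) * Real.exp (-(c2/4) * (n2:ℝ) / m)) := by
    rcases le_or_gt 4 n2 with h4 | h4
    · have h4R : (4:ℝ) ≤ (n2:ℝ) := by exact_mod_cast h4
      have h1t : (1:ℝ) ≤ (n2:ℝ)/4 := by linarith
      refine le_trans (htail ((n2:ℝ)/4) h1t) (ENNReal.ofReal_le_ofReal ?_)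
      have hrw : ((n2:ℝ)/4) ^ (α - 2) = 4 ^ (2 - α) * (n2:ℝ) ^ (α - 2) := by
        rw [Real.div_rpow (by positivity) (by norm_num),
            div_eq_mul_inv, ← Real.rpow_neg (by norm_num : (0:ℝ) ≤ 4)]
        rw [show -(α - 2) = 2 - α by ring]
        ring
      have hexp : Real.exp (-c2 * ((n2:ℝ)/4) / m) = Real.exp (-(c2/4) * (n2:ℝ) / m) := by
        congr 1; ring
      rw [hrw, hexp]
      have hle : c1 * 4 ^ (2 - α) ≤ c4 := le_max_left _ _
      have h1 : (0:ℝ) ≤ (n2:ℝ) ^ (α - 2) := by positivity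
      have h2 : (0:ℝ) ≤ Real.exp (-(c2/4) * (n2:ℝ) / m) := Real.exp_nonneg _
      calc c1 * (4 ^ (2 - α) * (n2:ℝ) ^ (α - 2)) * Real.exp (-(c2/4) * (n2:ℝ) / m)
          = (c1 * 4 ^ (2 - α)) * ((n2:ℝ) ^ (α - 2) * Real.exp (-(c2/4) * (n2:ℝ) / m)) := by
            ring
        _ ≤ c4 * ((n2:ℝ) ^ (α - 2) * Real.exp (-(c2/4) * (n2:ℝ) / m)) := by
            exact mul_le_mul_of_nonneg_right hle (by positivity)
        _ = c4 * (n2:ℝ) ^ (α - 2) * Real.exp (-(c2/4) * (n2:ℝ) / m) := by ring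
    · have hub : ν (Set.Ici ((n2:ℝ)/4)) ≤ 1 := prob_le_one
      refine le_trans hub ?_
      rw [← ENNReal.ofReal_one]
      apply ENNReal.ofReal_le_ofReal
      have hn2le3 : (n2:ℝ) ≤ 3 := by exact_mod_cast (by omega : n2 ≤ 3)
      have e1 : (3:ℝ) ^ (α - 2) ≤ (n2:ℝ) ^ (α - 2) :=
        Real.rpow_le_rpow_of_nonpos hn2R hn2le3 (by linarith)
      have hnm : (n2:ℝ) / m ≤ 3 := le_trans (div_le_self (le_of_lt hn2R) hm) hn2le3
      have e2 : Real.exp (-(3 * c2 / 4)) ≤ Real.exp (-(c2/4) * (n2:ℝ) / m) := by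
        apply Real.exp_le_exp.mpr
        have : -(c2/4) * (n2:ℝ) / m = -(c2/4 * ((n2:ℝ)/m)) := by ring
        rw [this]
        nlinarith
      have h3 : (3:ℝ) ^ (2 - α) * (3:ℝ) ^ (α - 2) = 1 := by
        rw [← Real.rpow_add (by norm_num : (0:ℝ) < 3), show (2 - α) + (α - 2) = 0 by ring,
          Real.rpow_zero]
      have he : Real.exp (3 * c2 / 4) * Real.exp (-(3 * c2 / 4)) = 1 := by
        rw [← Real.exp_add]; norm_num
      have key : (1:ℝ) = (3 ^ (2 - α) * Real.exp (3 * c2 / 4)) *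
          ((3:ℝ) ^ (α - 2) * Real.exp (-(3 * c2 / 4))) := by
        calc (1:ℝ) = ((3:ℝ) ^ (2 - α) * (3:ℝ) ^ (α - 2)) *
              (Real.exp (3 * c2 / 4) * Real.exp (-(3 * c2 / 4))) := by rw [h3, he]; norm_num
          _ = _ := by ring
      refine le_trans (le_of_eq key) ?_
      have hle : (3:ℝ) ^ (2 - α) * Real.exp (3 * c2 / 4) ≤ c4 := le_max_right _ _
      calc (3 ^ (2 - α) * Real.exp (3 * c2 / 4)) * ((3:ℝ) ^ (α - 2) * Real.exp (-(3 * c2 / 4)))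
          ≤ c4 * ((3:ℝ) ^ (α - 2) * Real.exp (-(3 * c2 / 4))) :=
            mul_le_mul_of_nonneg_right hle (by positivity)
        _ ≤ c4 * ((n2:ℝ) ^ (α - 2) * Real.exp (-(c2/4) * (n2:ℝ) / m)) := by
            refine mul_le_mul_of_nonneg_left ?_ (le_of_lt hc4pos)
            refine mul_le_mul e1 e2 (Real.exp_nonneg _) (by positivity)
        _ = c4 * (n2:ℝ) ^ (α - 2) * Real.exp (-(c2/4) * (n2:ℝ) / m) := by ring
  -- Combine
  refine le_trans step1 ?_
  have hmul : ENNReal.ofReal (c3 * m ^ (-β)) * (∑' v : ℤ × ℤ, ν (S v)) ≤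
      ENNReal.ofReal (c3 * m ^ (-β)) *
        ((K : ENNReal) * ENNReal.ofReal (c4 * (n2:ℝ) ^ (α - 2) * Real.exp (-(c2/4) * (n2:ℝ) / m))) :=
    mul_le_mul_right (le_trans step2 (mul_le_mul_right step3 _)) _
  refine le_trans hmul ?_
  have hKof : (K : ENNReal) = ENNReal.ofReal (K : ℝ) := by
    rw [ENNReal.ofReal_natCast]
  rw [hKof, ← ENNReal.ofReal_mul (by positivity), ← ENNReal.ofReal_mul (by positivity)]
  apply ENNReal.ofReal_le_ofReal
  have hrpow : (n2:ℝ) ^ (α - 1) = (n2:ℝ) * (n2:ℝ) ^ (α - 2) := by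
    rw [show α - 1 = 1 + (α - 2) by ring, Real.rpow_add hn2R, Real.rpow_one]
  have hKR : ((K:ℕ) : ℝ) = 32 * (n1:ℝ) * (n2:ℝ) := by push_cast [hK]; ring
  rw [hrpow, hKR]
  have hexp' : Real.exp (-(c2 / 4) * (n2:ℝ) / m) = Real.exp (-(c2 / 4) * (n2:ℝ) / m) := rfl
  apply le_of_eq
  ring
end
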